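/- arXiv:2101.11799 — 2 statements merged into one kernel-verified Lean document; each statement's English description precedes it below -/
import Mathlib

section
/- Let V be a real inner product space, let B and M be disjoint finite index sets of benign and compromised clients with real weights p, benign local models θ_i ∈ V for i ∈ B and compromised local models θ_i ∈ V for i ∈ M, and let θ* ∈ V be the attacker's target model. Set s = Σ_{i∈M} p_i, P = Σ_{i∈B} p_i + Σ_{i∈M} p_i, and c = (P − s)/s, and assume s ≠ 0. If every compromised client i ∈ M uploads the crafted model θ̂_i = (1/s)·(θ* − c·Σ_{j∈M} p_j θ_j), then the mean-aggregated model satisfies θ̂ = θ* + (Σ_{j∈B} p_j θ_j − c·Σ_{j∈M} p_j θ_j), and hence F_A(θ̂) = ‖Σ_{j∈B} p_j θ_j − c·Σ_{j∈M} p_j θ_j‖². -/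
/-! The crafted uploads are all equal to `(1/s) • (θ* − c • Σ_{j∈M} p_j θ_j)` and carry total
weight `s`, so together they contribute exactly `θ* − c • Σ_{j∈M} p_j θ_j` to the aggregate. -/

open Finset

theorem Finset.sum_smul_eq_of_forall_eq_inv_smul {ι 𝕜 V : Type*} [DivisionRing 𝕜]
    [AddCommGroup V] [Module 𝕜 V] {M : Finset ι} {p : ι → 𝕜} {f : ι → V} {x : V}
    (hp : ∑ i ∈ M, p i ≠ 0) (hf : ∀ i ∈ M, f i = (∑ i ∈ M, p i)⁻¹ • x) :
    ∑ i ∈ M, p i • f i = x := by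
  calc ∑ i ∈ M, p i • f i = ∑ i ∈ M, p i • ((∑ i ∈ M, p i)⁻¹ • x) :=
        sum_congr rfl fun i hi => by rw [hf i hi]
    _ = x := by rw [← sum_smul, smul_smul, mul_inv_cancel₀ hp, one_smul]

theorem cmp_mean_aggregation_partial_knowledge_general
    {ι V : Type*} [NormedAddCommGroup V] [InnerProductSpace ℝ V]
    (B M : Finset ι)
    (p : ι → ℝ) (θ : ι → V) (θstar : V)
    (s c : ℝ) (hs : s = ∑ i ∈ M, p i)
    (hsne : s ≠ 0)
    (θhat : ι → V)
    (hcraft : ∀ i ∈ M, θhat i = (1 / s) • (θstar - c • ∑ j ∈ M, p j • θ j))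
    (agg : V)
    (hagg : agg = (∑ i ∈ B, p i • θ i) + ∑ i ∈ M, p i • θhat i) :
    agg = θstar + ((∑ j ∈ B, p j • θ j) - c • ∑ j ∈ M, p j • θ j) ∧
      ‖agg - θstar‖ ^ 2 = ‖(∑ j ∈ B, p j • θ j) - c • ∑ j ∈ M, p j • θ j‖ ^ 2 := by
  subst hs
  have hcrafted : ∑ i ∈ M, p i • θhat i = θstar - c • ∑ j ∈ M, p j • θ j :=
    sum_smul_eq_of_forall_eq_inv_smul hsne fun i hi => by rw [hcraft i hi, one_div]
  have hagg' : agg = θstar + ((∑ j ∈ B, p j • θ j) - c • ∑ j ∈ M, p j • θ j) := by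
    rw [hagg, hcrafted]
    abel
  exact ⟨hagg', by rw [hagg', add_sub_cancel_left]⟩

/-- Theorem 1 (partial knowledge case): under mean aggregation, if every compromised
client uploads `(1/s) • (θ* − c • Σ_{j∈M} p_j θ_j)` with `s = Σ_{i∈M} p_i ≠ 0`,
`P = Σ_{i∈B} p_i + Σ_{i∈M} p_i` and `c = (P − s)/s`, then the aggregated model is
`θ* + (Σ_{j∈B} p_j θ_j − c • Σ_{j∈M} p_j θ_j)` and the attacker's loss equals
`‖Σ_{j∈B} p_j θ_j − c • Σ_{j∈M} p_j θ_j‖²`. -/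
theorem cmp_mean_aggregation_partial_knowledge
    {ι V : Type*} [NormedAddCommGroup V] [InnerProductSpace ℝ V]
    (B M : Finset ι) (hdisj : Disjoint B M)
    (p : ι → ℝ) (θ : ι → V) (θstar : V)
    (s P c : ℝ) (hs : s = ∑ i ∈ M, p i)
    (hP : P = (∑ i ∈ B, p i) + ∑ i ∈ M, p i)
    (hc : c = (P - s) / s) (hsne : s ≠ 0)
    (θhat : ι → V)
    (hcraft : ∀ i ∈ M, θhat i = (1 / s) • (θstar - c • ∑ j ∈ M, p j • θ j))
    (agg : V)
    (hagg : agg = (∑ i ∈ B, p i • θ i) + ∑ i ∈ M, p i • θhat i) :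
    agg = θstar + ((∑ j ∈ B, p j • θ j) - c • ∑ j ∈ M, p j • θ j) ∧
      ‖agg - θstar‖ ^ 2 = ‖(∑ j ∈ B, p j • θ j) - c • ∑ j ∈ M, p j • θ j‖ ^ 2 :=
  cmp_mean_aggregation_partial_knowledge_general B M p θ θstar s c hs hsne θhat hcraft agg hagg
end

section
/- Let V be a real inner product space. Let B be a finite set of benign clients with models θ_j ∈ V (j ∈ B) and |B| = n − m, and let θ̂_1, …, θ̂_m ∈ V be the crafted compromised models, where n and m are natural numbers with m ≥ 1 and n − 2m − 1 ≥ 0. Assume ‖θ̂_i − θ̂_1‖ ≤ ε for every i ∈ {2, …, m}. Then the Krum score of θ̂_1, namely the minimum over subsets T of {θ̂_2, …, θ̂_m} ∪ {θ_j : j ∈ B} with |T| = n − m − 2 of the sum of the distances from θ̂_1 to the members of T, satisfies: Krum score of θ̂_1 ≤ (m − 1)·ε + min over subsets S' ⊆ B with |S'| = n − 2m − 1 of Σ_{j∈S'} ‖θ_j − θ̂_1‖. -/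
/-! The closest-set of `θ̂_1` may be taken to be the `m - 1` auxiliary crafted models, each at
distance at most `ε`, together with any `n - 2m - 1` benign models; the cardinalities match since
`(m - 1) + (n - 2m - 1) = n - m - 2`. Minimising over the benign part gives the bound. -/

theorem Finset.map_inl_union_map_inr {α β : Type*} [DecidableEq (α ⊕ β)]
    (s : Finset α) (t : Finset β) :
    s.map .inl ∪ t.map .inr = s.disjSum t := by
  ext x
  rcases x with a | b <;> simp

theorem csInf_le_add_csInf {α : Type*} [ConditionallyCompleteLattice α] [AddCommGroup α]
    [IsOrderedAddMonoid α] {s t : Set α} (c : α) (ht : BddBelow t) (hs : s.Nonempty)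
    (h : ∀ x ∈ s, ∃ y ∈ t, y ≤ c + x) : sInf t ≤ c + sInf s := by
  rw [← sub_le_iff_le_add']
  refine le_csInf hs fun x hx => ?_
  obtain ⟨y, hy, hyx⟩ := h x hx
  rw [sub_le_iff_le_add']
  exact (csInf_le ht hy).trans hyx

theorem sum_Icc_two_le_of_le {m : ℕ} (hm : 1 ≤ m) (f : ℕ → ℝ) {ε : ℝ}
    (hf : ∀ i ∈ Finset.Icc 2 m, f i ≤ ε) :
    ∑ i ∈ Finset.Icc 2 m, f i ≤ ((m : ℝ) - 1) * ε := by
  calc ∑ i ∈ Finset.Icc 2 m, f i ≤ (Finset.Icc 2 m).card • ε := Finset.sum_le_card_nsmul _ _ _ hf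
    _ = ((m : ℝ) - 1) * ε := by
        rw [Nat.card_Icc, nsmul_eq_mul, Nat.cast_sub (by omega)]
        push_cast
        ring

open Finset in
theorem krum_score_crafted_upper_bound_general
    {ι V : Type*} [DecidableEq ι] [NormedAddCommGroup V]
    (n m : ℕ) (hm : 1 ≤ m) (hnm : 2 * m + 1 ≤ n)
    (B : Finset ι) (hBcard : B.card = n - m)
    (θ : ι → V) (θhat : ℕ → V) (ε : ℝ)
    (hclose : ∀ i ∈ Finset.Icc 2 m, ‖θhat i - θhat 1‖ ≤ ε) :
    sInf {x : ℝ |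
        ∃ T ⊆ (Finset.Icc 2 m).map (Function.Embedding.inl (β := ι)) ∪
            B.map (Function.Embedding.inr (α := ℕ)),
          T.card = n - m - 2 ∧ x = ∑ j ∈ T, ‖θhat 1 - Sum.elim θhat θ j‖} ≤
      ((m : ℝ) - 1) * ε +
        sInf {x : ℝ | ∃ S ⊆ B, S.card = n - 2 * m - 1 ∧
          x = ∑ j ∈ S, ‖θ j - θhat 1‖} := by
  obtain ⟨S₀, hS₀B, hS₀card⟩ := B.exists_subset_card_eq (n := n - 2 * m - 1) (by omega)
  refine csInf_le_add_csInf _ ⟨0, ?_⟩ ⟨_, S₀, hS₀B, hS₀card, rfl⟩ ?_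
  · rintro _ ⟨T, -, -, rfl⟩
    exact sum_nonneg fun _ _ => norm_nonneg _
  rintro _ ⟨S, hSB, hScard, rfl⟩
  refine ⟨_, ⟨(Icc 2 m).disjSum S, ?_, ?_, rfl⟩, ?_⟩
  · rw [map_inl_union_map_inr]
    exact disjSum_mono Subset.rfl hSB
  · rw [card_disjSum, Nat.card_Icc, hScard]
    omega
  · simp only [sum_disjSum, Sum.elim_inl, Sum.elim_inr, norm_sub_rev (θhat 1)]
    exact add_le_add_left (sum_Icc_two_le_of_le hm _ hclose) _

/-- Upper bound on the Krum score of the primary crafted model `θ̂_1`: with `m`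
compromised clients (indexed `1, …, m`, primary `θ̂_1`), `|B| = n − m` benign clients,
and the auxiliary crafted models within distance `ε` of `θ̂_1`, the Krum score of
`θ̂_1` (minimum over subsets `T` of the other uploaded models, `|T| = n − m − 2`, of
the sum of distances from `θ̂_1`) is at most
`(m − 1)·ε + min_{S' ⊆ B, |S'| = n − 2m − 1} Σ_{j∈S'} ‖θ_j − θ̂_1‖`. -/
theorem krum_score_crafted_upper_bound
    {ι V : Type*} [DecidableEq ι] [NormedAddCommGroup V] [InnerProductSpace ℝ V]
    (n m : ℕ) (hm : 1 ≤ m) (hnm : 2 * m + 1 ≤ n)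
    (B : Finset ι) (hBcard : B.card = n - m)
    (θ : ι → V) (θhat : ℕ → V) (ε : ℝ)
    (hclose : ∀ i ∈ Finset.Icc 2 m, ‖θhat i - θhat 1‖ ≤ ε) :
    sInf {x : ℝ |
        ∃ T ⊆ (Finset.Icc 2 m).map (Function.Embedding.inl (β := ι)) ∪
            B.map (Function.Embedding.inr (α := ℕ)),
          T.card = n - m - 2 ∧ x = ∑ j ∈ T, ‖θhat 1 - Sum.elim θhat θ j‖} ≤
      ((m : ℝ) - 1) * ε +
        sInf {x : ℝ | ∃ S ⊆ B, S.card = n - 2 * m - 1 ∧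
          x = ∑ j ∈ S, ‖θ j - θhat 1‖} :=
  krum_score_crafted_upper_bound_general n m hm hnm B hBcard θ θhat ε hclose
end
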